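/- arXiv:1602.00422 — 3 statements merged into one kernel-verified Lean document; each statement's English description precedes it below -/
import Mathlib

section
/- Let w ≥ 1 and let P and Q be lists of Booleans, each of length w, with P ≠ Q. Interpret P and Q as natural numbers p = toNat(P) and q = toNat(Q) via big-endian binary encoding. Then the length of the longest common prefix of P and Q equals w − 1 − Nat.log2 (Nat.xor p q). (Since P ≠ Q and both have length w, Nat.xor p q ≠ 0, so the base-2 logarithm is the position of the most significant differing bit.) -/
/-- Length of the longest common prefix of two lists. -/
def lcpLen {α : Type*} [DecidableEq α] : List α → List α → ℕ
  | a :: x, b :: y => if a = b then lcpLen x y + 1 else 0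
  | _, _ => 0

/-- Big-endian binary encoding of a list of Booleans. -/
def boolToNat (B : List Bool) : ℕ :=
  ∑ i : Fin B.length, (if B.get i then 1 else 0) * 2 ^ (B.length - 1 - (i : ℕ))

/-! Prepending letters `a`, `b` to two words of length `n` adds `2 ^ n * (a xor b)` to the xor of
their encodings. So a common first letter leaves the xor unchanged, while differing first letters
make its most significant bit exactly `n`. -/

theorem Nat.two_pow_mul_add_xor {n r s : ℕ} (hr : r < 2 ^ n) (hs : s < 2 ^ n) (a b : ℕ) :
    (2 ^ n * a + r) ^^^ (2 ^ n * b + s) = 2 ^ n * (a ^^^ b) + (r ^^^ s) := by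
  apply Nat.eq_of_testBit_eq
  intro i
  simp only [Nat.testBit_xor, Nat.testBit_two_pow_mul_add _ hr, Nat.testBit_two_pow_mul_add _ hs,
    Nat.testBit_two_pow_mul_add _ (Nat.xor_lt_two_pow hr hs)]
  split_ifs <;> rfl

theorem Nat.log2_two_pow_add {n t : ℕ} (ht : t < 2 ^ n) : (2 ^ n + t).log2 = n := by
  rw [Nat.log2_eq_iff (by positivity), Nat.pow_succ]
  omega

theorem boolToNat_cons (a : Bool) (x : List Bool) :
    boolToNat (a :: x) = 2 ^ x.length * a.toNat + boolToNat x := by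
  refine (Fin.sum_univ_succ (n := x.length) _).trans ?_
  cases a <;> simp [boolToNat, Nat.sub_sub, Nat.add_comm 1]

theorem boolToNat_lt (x : List Bool) : boolToNat x < 2 ^ x.length := by
  induction x with
  | nil => simp [boolToNat]
  | cons a x ih =>
    rw [boolToNat_cons, List.length_cons, Nat.pow_succ]
    cases a <;> simp <;> omega

theorem lcpLen_add_log2_xor_boolToNat_add_one :
    ∀ {x y : List Bool}, x.length = y.length → x ≠ y →
      lcpLen x y + (boolToNat x ^^^ boolToNat y).log2 + 1 = x.length
  | [], [], _, hne => absurd rfl hne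
  | a :: x, b :: y, hlen, hne => by
    have hlen' : x.length = y.length := Nat.succ.inj hlen
    have hy := boolToNat_lt y
    rw [← hlen'] at hy
    rw [boolToNat_cons, boolToNat_cons, ← hlen', Nat.two_pow_mul_add_xor (boolToNat_lt x) hy]
    by_cases hab : a = b
    · subst hab
      have ih := lcpLen_add_log2_xor_boolToNat_add_one hlen' fun h => hne (h ▸ rfl)
      simp only [lcpLen, if_pos, Nat.xor_self, Nat.mul_zero, Nat.zero_add, List.length_cons]
      omega
    · have hab' : a.toNat ^^^ b.toNat = 1 := by cases a <;> cases b <;> simp_all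
      simp [lcpLen, hab, hab', Nat.log2_two_pow_add (Nat.xor_lt_two_pow (boolToNat_lt x) hy)]

theorem lcp_eq_of_xor_msb_general (w : ℕ) (P Q : List Bool)
    (hP : P.length = w) (hQ : Q.length = w) (hne : P ≠ Q) :
    lcpLen P Q = w - 1 - Nat.log2 (Nat.xor (boolToNat P) (boolToNat Q)) := by
  have key := lcpLen_add_log2_xor_boolToNat_add_one (hP.trans hQ.symm) hne
  change _ = w - 1 - (boolToNat P ^^^ boolToNat Q).log2
  omega

theorem lcp_eq_of_xor_msb (w : ℕ) (hw : 1 ≤ w) (P Q : List Bool)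
    (hP : P.length = w) (hQ : Q.length = w) (hne : P ≠ Q) :
    lcpLen P Q = w - 1 - Nat.log2 (Nat.xor (boolToNat P) (boolToNat Q)) :=
  lcp_eq_of_xor_msb_general w P Q hP hQ hne
end

section
/- Let s ≥ 1, let σ = 2^s, let α ≥ 1, and let P and Q be lists over Fin σ, each of length α, with P ≠ Q. Interpret P and Q as natural numbers p = toNat(P) and q = toNat(Q) via big-endian base-σ encoding (so that each letter occupies s consecutive bits). Then the length of the longest common prefix of P and Q (as lists of letters) equals α − 1 − (Nat.log2 (Nat.xor p q)) / s, where the division is natural-number (floor) division. -/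
/-- Big-endian base-`σ` encoding of a list over `Fin σ`. -/
def finToNat {σ : ℕ} (X : List (Fin σ)) : ℕ :=
  ∑ i : Fin X.length, (X.get i : ℕ) * σ ^ (X.length - 1 - (i : ℕ))

/-!
With `σ = 2 ^ s`, the encoding of `a :: x` is `a * 2 ^ (s * |x|) + finToNat x`, and the tail is
below `2 ^ (s * |x|)`, so XOR acts on the leading letter and on the tail independently. A shared
leading letter therefore cancels, while a first mismatching letter contributes a nonzero value
below `2 ^ s` in front of the remaining `s * m` bits. Hence the XOR lies in
`[2 ^ (s * m), 2 ^ (s * (m + 1)))`, where `m` counts the letters after the first mismatch, and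
its most significant bit divided by `s` is `m`.
-/

theorem finToNat_cons {σ : ℕ} (a : Fin σ) (x : List (Fin σ)) :
    finToNat (a :: x) = (a : ℕ) * σ ^ x.length + finToNat x := by
  change ∑ i : Fin (x.length + 1), ((a :: x).get i : ℕ) * σ ^ (x.length + 1 - 1 - (i : ℕ)) = _
  rw [Fin.sum_univ_succ]
  simp only [List.get_cons_zero, Fin.val_zero, Nat.add_sub_cancel, Nat.sub_zero,
    Fin.val_succ, finToNat]
  congr 1
  refine Finset.sum_congr rfl fun i _ => ?_
  congr 2
  omega

theorem finToNat_lt_pow_length {σ : ℕ} (x : List (Fin σ)) : finToNat x < σ ^ x.length := by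
  induction x with
  | nil => simp [finToNat]
  | cons a x ih =>
    rw [finToNat_cons, List.length_cons, pow_succ']
    calc (a : ℕ) * σ ^ x.length + finToNat x < ((a : ℕ) + 1) * σ ^ x.length := by
          rw [add_one_mul]; omega
      _ ≤ σ * σ ^ x.length := Nat.mul_le_mul_right _ a.isLt

theorem Nat.xor_mul_two_pow_add {k a b p q : ℕ} (hp : p < 2 ^ k) (hq : q < 2 ^ k) :
    (a * 2 ^ k + p) ^^^ (b * 2 ^ k + q) = (a ^^^ b) * 2 ^ k + (p ^^^ q) := by
  apply Nat.eq_of_testBit_eq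
  intro j
  rw [Nat.testBit_xor, mul_comm a, mul_comm b, mul_comm (a ^^^ b),
    Nat.testBit_two_pow_mul_add _ hp, Nat.testBit_two_pow_mul_add _ hq,
    Nat.testBit_two_pow_mul_add _ (Nat.xor_lt_two_pow hp hq)]
  split <;> rw [Nat.testBit_xor]

theorem Nat.log2_div_eq_of_two_pow_le_of_lt {s m x : ℕ} (hlo : 2 ^ (s * m) ≤ x)
    (hhi : x < 2 ^ (s * (m + 1))) : x.log2 / s = m := by
  have hx : x ≠ 0 := (Nat.two_pow_pos _).trans_le hlo |>.ne'
  refine Nat.div_eq_of_lt_le ?_ ?_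
  · rw [mul_comm]
    exact (Nat.le_log2 hx).2 hlo
  · rw [mul_comm]
    exact (Nat.log2_lt hx).2 hhi

theorem finToNat_lt_two_pow {s : ℕ} (x : List (Fin (2 ^ s))) :
    finToNat x < 2 ^ (s * x.length) :=
  pow_mul 2 s x.length ▸ finToNat_lt_pow_length x

theorem xor_finToNat_cons {s : ℕ} (a b : Fin (2 ^ s)) {x y : List (Fin (2 ^ s))}
    (hlen : x.length = y.length) :
    finToNat (a :: x) ^^^ finToNat (b :: y)
      = ((a : ℕ) ^^^ (b : ℕ)) * 2 ^ (s * x.length) + (finToNat x ^^^ finToNat y) := by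
  rw [finToNat_cons, finToNat_cons, ← hlen, ← pow_mul]
  exact Nat.xor_mul_two_pow_add (finToNat_lt_two_pow x) (hlen ▸ finToNat_lt_two_pow y)

theorem exists_two_pow_le_xor_finToNat_lt {s : ℕ} {P Q : List (Fin (2 ^ s))}
    (hlen : P.length = Q.length) (hne : P ≠ Q) :
    ∃ m, lcpLen P Q + 1 + m = P.length ∧
      2 ^ (s * m) ≤ finToNat P ^^^ finToNat Q ∧ finToNat P ^^^ finToNat Q < 2 ^ (s * (m + 1)) := by
  induction P generalizing Q with
  | nil =>
    obtain rfl : Q = [] := List.length_eq_zero_iff.1 hlen.symm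
    exact absurd rfl hne
  | cons a x ih =>
    obtain _ | ⟨b, y⟩ := Q
    · simp at hlen
    have hlen' : x.length = y.length := Nat.succ.inj hlen
    rw [xor_finToNat_cons a b hlen']
    by_cases hab : a = b
    · subst hab
      have hlcp : lcpLen (a :: x) (a :: y) = lcpLen x y + 1 := if_pos rfl
      obtain ⟨m, hm, hbounds⟩ := ih hlen' fun h => hne (h ▸ rfl)
      refine ⟨m, ?_, ?_⟩
      · rw [hlcp, List.length_cons]
        omega
      · rwa [Nat.xor_self, zero_mul, zero_add]
    · have hlcp : lcpLen (a :: x) (b :: y) = 0 := if_neg hab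
      refine ⟨x.length, by rw [hlcp, List.length_cons]; omega, ?_⟩
      have hlead_pos : 0 < (a : ℕ) ^^^ (b : ℕ) :=
        Nat.pos_of_ne_zero fun h => hab (Fin.ext (xor_eq_zero_iff.1 h))
      have hlead_lt : (a : ℕ) ^^^ (b : ℕ) < 2 ^ s := Nat.xor_lt_two_pow a.isLt b.isLt
      have htail_lt : finToNat x ^^^ finToNat y < 2 ^ (s * x.length) :=
        Nat.xor_lt_two_pow (finToNat_lt_two_pow x) (hlen' ▸ finToNat_lt_two_pow y)
      constructor
      · exact Nat.le_add_right_of_le (Nat.le_mul_of_pos_left _ hlead_pos)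
      · calc ((a : ℕ) ^^^ (b : ℕ)) * 2 ^ (s * x.length) + (finToNat x ^^^ finToNat y)
            < (((a : ℕ) ^^^ (b : ℕ)) + 1) * 2 ^ (s * x.length) := by rw [add_one_mul]; omega
          _ ≤ 2 ^ s * 2 ^ (s * x.length) := Nat.mul_le_mul_right _ hlead_lt
          _ = 2 ^ (s * (x.length + 1)) := by rw [← pow_add]; ring_nf

theorem lcp_eq_of_xor_msb_packed_general (s : ℕ) (α : ℕ)
    (P Q : List (Fin (2 ^ s)))
    (hP : P.length = α) (hQ : Q.length = α) (hne : P ≠ Q) :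
    lcpLen P Q = α - 1 - Nat.log2 (Nat.xor (finToNat P) (finToNat Q)) / s := by
  obtain ⟨m, hm, hlo, hhi⟩ := exists_two_pow_le_xor_finToNat_lt (hP.trans hQ.symm) hne
  rw [Nat.xor_eq, Nat.log2_div_eq_of_two_pow_le_of_lt hlo hhi]
  omega

theorem lcp_eq_of_xor_msb_packed (s : ℕ) (hs : 1 ≤ s) (α : ℕ) (hα : 1 ≤ α)
    (P Q : List (Fin (2 ^ s)))
    (hP : P.length = α) (hQ : Q.length = α) (hne : P ≠ Q) :
    lcpLen P Q = α - 1 - Nat.log2 (Nat.xor (finToNat P) (finToNat Q)) / s :=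
  lcp_eq_of_xor_msb_packed_general s α P Q hP hQ hne
end

section
/- Let S be a nonempty finite set of strings over a linearly ordered alphabet and let P be a string. Then there exists Y ∈ S attaining the maximum of |lcp(P,X)| over all X ∈ S such that Y is either the lexicographically greatest element of { X ∈ S | X ≤lex P } (the lexicographic predecessor of P in S) or the lexicographically least element of { X ∈ S | P ≤lex X } (the lexicographic successor of P in S). Equivalently, the maximum of |lcp(P,X)| over X ∈ S equals the maximum of |lcp(P, pred)| and |lcp(P, succ)| over whichever of the predecessor and successor exist. -/
/-- Non-strict lexicographic order on lists. -/
def lexLe {α : Type*} [LT α] (x y : List α) : Prop :=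
  List.Lex (· < ·) x y ∨ x = y

lemma lexLe_iff_le {A : Type*} [LinearOrder A] {x y : List A} :
    lexLe x y ↔ x ≤ y := by
  rw [le_iff_lt_or_eq]
  rfl

lemma lcpLen_le_length {A : Type*} [DecidableEq A] (p x : List A) :
    lcpLen p x ≤ p.length := by
  induction p generalizing x with
  | nil => cases x <;> simp [lcpLen]
  | cons a p ih =>
    cases x with
    | nil => simp [lcpLen]
    | cons b x =>
      simp only [lcpLen, List.length_cons]
      split
      · exact Nat.succ_le_succ (ih x)
      · omega

lemma lcpLen_self {A : Type*} [DecidableEq A] (p : List A) :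
    lcpLen p p = p.length := by
  induction p with
  | nil => simp [lcpLen]
  | cons a p ih => simp [lcpLen, ih]

lemma lcp_mono_below {A : Type*} [LinearOrder A] (p x y : List A)
    (h1 : List.Lex (· < ·) x y) (h2 : List.Lex (· < ·) y p) :
    lcpLen p x ≤ lcpLen p y := by
  induction p generalizing x y with
  | nil => cases x <;> simp [lcpLen]
  | cons a p ih =>
    cases x with
    | nil => cases y <;> simp [lcpLen]
    | cons b x =>
      cases y with
      | nil => exact absurd h1 (by cases h1)
      | cons c y =>
        simp only [lcpLen]
        by_cases hab : a = b
        · subst hab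
          cases h1 with
          | rel hbc =>
            exfalso
            cases h2 with
            | rel hca => exact absurd (hbc.trans hca) (lt_irrefl a)
            | cons _ => exact absurd hbc (lt_irrefl a)
          | cons h1' =>
            cases h2 with
            | rel hca => exact absurd hca (lt_irrefl a)
            | cons h2' =>
              simp only [if_pos rfl]
              exact Nat.succ_le_succ (ih x y h1' h2')
        · simp [hab]

lemma lcp_mono_above {A : Type*} [LinearOrder A] (p x y : List A)
    (h1 : List.Lex (· < ·) y x) (h2 : List.Lex (· < ·) p y) :
    lcpLen p x ≤ lcpLen p y := by
  induction p generalizing x y with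
  | nil => cases x <;> simp [lcpLen]
  | cons a p ih =>
    cases x with
    | nil => cases y <;> simp [lcpLen]
    | cons b x =>
      cases y with
      | nil => exact absurd h2 (by intro h; cases h)
      | cons c y =>
        simp only [lcpLen]
        by_cases hab : a = b
        · subst hab
          cases h2 with
          | rel hac =>
            exfalso
            cases h1 with
            | rel hca => exact absurd (hac.trans hca) (lt_irrefl a)
            | cons _ => exact absurd hac (lt_irrefl a)
          | cons h2' =>
            cases h1 with
            | rel hca => exact absurd hca (lt_irrefl a)
            | cons h1' =>
              simp only [if_pos rfl]
              exact Nat.succ_le_succ (ih x y h1' h2')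
        · simp [hab]

lemma lcp_mono_below' {A : Type*} [LinearOrder A] {p x y : List A}
    (h1 : x ≤ y) (h2 : y ≤ p) : lcpLen p x ≤ lcpLen p y := by
  rcases eq_or_lt_of_le h1 with rfl | h1
  · exact le_refl _
  rcases eq_or_lt_of_le h2 with rfl | h2
  · exact (lcpLen_le_length _ x).trans (lcpLen_self _).ge
  exact lcp_mono_below _ x y h1 h2

lemma lcp_mono_above' {A : Type*} [LinearOrder A] {p x y : List A}
    (h1 : y ≤ x) (h2 : p ≤ y) : lcpLen p x ≤ lcpLen p y := by
  rcases eq_or_lt_of_le h1 with rfl | h1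
  · exact le_refl _
  rcases eq_or_lt_of_le h2 with rfl | h2
  · exact (lcpLen_le_length _ x).trans (lcpLen_self _).ge
  exact lcp_mono_above _ x y h1 h2

theorem max_lcp_attained_at_pred_or_succ {A : Type*} [LinearOrder A]
    (S : Finset (List A)) (hS : S.Nonempty) (P : List A) :
    ∃ Y ∈ S, (∀ X ∈ S, lcpLen P X ≤ lcpLen P Y) ∧
      ((lexLe Y P ∧ ∀ X ∈ S, lexLe X P → lexLe X Y) ∨
       (lexLe P Y ∧ ∀ X ∈ S, lexLe P X → lexLe Y X)) := by
  simp only [lexLe_iff_le]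
  set L := S.filter (· ≤ P) with hL
  set U := S.filter (P ≤ ·) with hU
  have mem_L : ∀ x, x ∈ L ↔ x ∈ S ∧ x ≤ P := by simp [hL]
  have mem_U : ∀ x, x ∈ U ↔ x ∈ S ∧ P ≤ x := by simp [hU]
  -- the greatest lower candidate / least upper candidate
  by_cases hLne : L.Nonempty
  · by_cases hUne : U.Nonempty
    · -- both exist; pick the one with bigger lcp
      set y₁ := L.max' hLne
      set y₂ := U.min' hUne
      have hy₁S : y₁ ∈ S := ((mem_L _).1 (L.max'_mem hLne)).1
      have hy₁P : y₁ ≤ P := ((mem_L _).1 (L.max'_mem hLne)).2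
      have hy₂S : y₂ ∈ S := ((mem_U _).1 (U.min'_mem hUne)).1
      have hy₂P : P ≤ y₂ := ((mem_U _).1 (U.min'_mem hUne)).2
      have hmax : ∀ X ∈ S, lcpLen P X ≤ max (lcpLen P y₁) (lcpLen P y₂) := by
        intro X hX
        rcases le_total X P with h | h
        · exact le_max_of_le_left
            (lcp_mono_below' (L.le_max' X ((mem_L _).2 ⟨hX, h⟩)) hy₁P)
        · exact le_max_of_le_right
            (lcp_mono_above' (U.min'_le X ((mem_U _).2 ⟨hX, h⟩)) hy₂P)
      rcases le_total (lcpLen P y₂) (lcpLen P y₁) with h | h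
      · refine ⟨y₁, hy₁S, fun X hX => ?_, Or.inl ⟨hy₁P, fun X hX hXP =>
          L.le_max' X ((mem_L _).2 ⟨hX, hXP⟩)⟩⟩
        simpa [max_eq_left h] using hmax X hX
      · refine ⟨y₂, hy₂S, fun X hX => ?_, Or.inr ⟨hy₂P, fun X hX hPX =>
          U.min'_le X ((mem_U _).2 ⟨hX, hPX⟩)⟩⟩
        simpa [max_eq_right h] using hmax X hX
    · -- U empty: everything is ≤ P
      have hLall : ∀ X ∈ S, X ∈ L := fun X hX => (mem_L _).2 ⟨hX,
        (le_total X P).resolve_right (fun h => hUne ⟨X, (mem_U _).2 ⟨hX, h⟩⟩)⟩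
      set y₁ := L.max' hLne
      have hy₁S : y₁ ∈ S := ((mem_L _).1 (L.max'_mem hLne)).1
      have hy₁P : y₁ ≤ P := ((mem_L _).1 (L.max'_mem hLne)).2
      refine ⟨y₁, hy₁S, fun X hX => ?_, Or.inl ⟨hy₁P, fun X hX _ =>
        L.le_max' X (hLall X hX)⟩⟩
      exact lcp_mono_below' (L.le_max' X (hLall X hX)) hy₁P
  · -- L empty: everything is ≥ P
    have hUall : ∀ X ∈ S, X ∈ U := fun X hX => (mem_U _).2 ⟨hX,
      (le_total P X).resolve_right (fun h => hLne ⟨X, (mem_L _).2 ⟨hX, h⟩⟩)⟩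
    have hUne : U.Nonempty := hS.imp (fun x hx => hUall x hx)
    set y₂ := U.min' hUne
    have hy₂S : y₂ ∈ S := ((mem_U _).1 (U.min'_mem hUne)).1
    have hy₂P : P ≤ y₂ := ((mem_U _).1 (U.min'_mem hUne)).2
    refine ⟨y₂, hy₂S, fun X hX => ?_, Or.inr ⟨hy₂P, fun X hX _ =>
      U.min'_le X (hUall X hX)⟩⟩
    exact lcp_mono_above' (U.min'_le X (hUall X hX)) hy₂P
end
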